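/- Every subalgebra of a Ramsey algebra is a Ramsey algebra. -/
import Mathlib


namespace RamseyAlg

/- Orderly-term syntax trees over an operation-index type `ι`:
`leaf` is the identity (a single variable), `node g f` applies the basic
operation `g` to the results of the trees in the forest `f`. -/
mutual
  inductive OTree (ι : Type) : Type
    | leaf : OTree ι
    | node : ι → OForest ι → OTree ι
  inductive OForest (ι : Type) : Type
    | nil : OForest ι
    | cons : OTree ι → OForest ι → OForest ι
end

def OForest.length {ι : Type} : OForest ι → ℕ
  | .nil => 0
  | .cons _ f => f.length + 1

/- Well-formedness: each node applies a `k`-ary basic operation to exactly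
`k` subtrees, where `ar` gives the arities. -/
mutual
  def OTree.WF {ι : Type} (ar : ι → ℕ) : OTree ι → Prop
    | .leaf => True
    | .node g f => OForest.length f = ar g ∧ OForest.WF ar f
  def OForest.WF {ι : Type} (ar : ι → ℕ) : OForest ι → Prop
    | .nil => True
    | .cons t f => OTree.WF ar t ∧ OForest.WF ar f
end

/- Evaluation of an orderly term on an input list: the variables of the term
consume an initial segment of the list, in order, each exactly once; what
remains of the list is returned alongside the value. -/
mutual
  def OTree.evalAux {ι A : Type} (F : ι → List A → A) :
      OTree ι → List A → Option (A × List A)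
    | .leaf, [] => none
    | .leaf, a :: rest => some (a, rest)
    | .node g f, l =>
      match OForest.evalAux F f l with
      | none => none
      | some (rs, rest) => some (F g rs, rest)
  def OForest.evalAux {ι A : Type} (F : ι → List A → A) :
      OForest ι → List A → Option (List A × List A)
    | .nil, l => some ([], l)
    | .cons t f, l =>
      match OTree.evalAux F t l with
      | none => none
      | some (r, rest) =>
        match OForest.evalAux F f rest with
        | none => none
        | some (rs, rest') => some (r :: rs, rest')
end

/- The value of the orderly term `t` on the finite sequence `l`, defined
exactly when the variables of `t` consume all of `l`. -/
def OTree.eval {ι A : Type} (F : ι → List A → A) (t : OTree ι) (l : List A) :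
    Option A :=
  match OTree.evalAux F t l with
  | some (a, []) => some a
  | _ => none

/- `Reduction ar F a b` : `a` is a reduction of `b` with respect to `F`, i.e.
there are well-formed orderly terms `t j` applied to consecutive disjoint
finite subsequences of `b` (extracted by the strictly monotone `e`, in blocks
of lengths `len j`) producing the terms of `a` in order. -/
def Reduction {ι A : Type} (ar : ι → ℕ) (F : ι → List A → A)
    (a b : ℕ → A) : Prop :=
  ∃ (t : ℕ → OTree ι) (len : ℕ → ℕ) (e : ℕ → ℕ),
    StrictMono e ∧ (∀ j, (t j).WF ar) ∧
    ∀ j, (t j).eval F ((List.range (len j)).map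
        (fun i => b (e ((∑ m ∈ Finset.range j, len m) + i)))) = some (a j)

/- `FR ar F b` : the set of values of orderly terms over `F` applied to
finite subsequences of `b`. -/
def FR {ι A : Type} (ar : ι → ℕ) (F : ι → List A → A) (b : ℕ → A) : Set A :=
  { x | ∃ (t : OTree ι) (l : List ℕ), t.WF ar ∧ l.Chain' (· < ·) ∧
      t.eval F (l.map b) = some x }

/- `(A, F)` is a Ramsey algebra: every infinite sequence has, for every
`X ⊆ A`, a reduction homogeneous for `X`. -/
def RamseyAlgebra {ι A : Type} (ar : ι → ℕ) (F : ι → List A → A) : Prop :=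
  ∀ (b : ℕ → A) (X : Set A), ∃ a : ℕ → A,
    Reduction ar F a b ∧ (FR ar F a ⊆ X ∨ FR ar F a ∩ X = ∅)

end RamseyAlg


namespace RamseyAlgAux
open RamseyAlg

variable {ι A : Type} {ar : ι → ℕ} {F : ι → List A → A} {S : Set A}
  {Fs : ι → List S → S}

theorem forestLen : ∀ (f : OForest ι) (l : List S) rs rest,
    OForest.evalAux Fs f l = some (rs, rest) → rs.length = f.length
  | .nil, l, rs, rest, h => by
    simp [OForest.evalAux] at h; simp [h.1, OForest.length]
  | .cons t f, l, rs, rest, h => by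
    simp only [OForest.evalAux] at h
    cases ht : OTree.evalAux Fs t l with
    | none => rw [ht] at h; simp at h
    | some p =>
      rw [ht] at h
      cases hf : OForest.evalAux Fs f p.2 with
      | none => simp [hf] at h
      | some q =>
        simp [hf] at h
        cases h.1; cases h.2
        simp [OForest.length, forestLen f _ _ _ hf]

mutual
theorem treeEval (hFs : ∀ i (l : List S), l.length = ar i →
    (Fs i l : A) = F i (l.map Subtype.val)) :
    ∀ (t : OTree ι), t.WF ar → ∀ l : List S,
      OTree.evalAux F t (l.map Subtype.val) =
        (OTree.evalAux Fs t l).map (fun p => (p.1.val, p.2.map Subtype.val))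
  | .leaf, _, l => by
    cases l <;> simp [OTree.evalAux]
  | .node g f, hwf, l => by
    simp only [OTree.evalAux]
    rw [forestEval hFs f hwf.2 l]
    cases hf : OForest.evalAux Fs f l with
    | none => simp
    | some q =>
      simp only [Option.map_some, OTree.evalAux]
      have hlen : q.1.length = ar g := by
        rw [forestLen f l q.1 q.2 (by simpa using hf), hwf.1]
      rw [← hFs g q.1 hlen]
theorem forestEval (hFs : ∀ i (l : List S), l.length = ar i →
    (Fs i l : A) = F i (l.map Subtype.val)) :
    ∀ (f : OForest ι), f.WF ar → ∀ l : List S,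
      OForest.evalAux F f (l.map Subtype.val) =
        (OForest.evalAux Fs f l).map
          (fun p => (p.1.map Subtype.val, p.2.map Subtype.val))
  | .nil, _, l => by simp [OForest.evalAux]
  | .cons t f, hwf, l => by
    simp only [OForest.evalAux]
    rw [treeEval hFs t hwf.1 l]
    cases ht : OTree.evalAux Fs t l with
    | none => simp
    | some p =>
      simp only [Option.map_some]
      rw [forestEval hFs f hwf.2 p.2]
      cases hf : OForest.evalAux Fs f p.2 <;> simp
end

theorem evalEq (hFs : ∀ i (l : List S), l.length = ar i →
    (Fs i l : A) = F i (l.map Subtype.val))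
    (t : OTree ι) (hwf : t.WF ar) (l : List S) :
    OTree.eval F t (l.map Subtype.val) = (OTree.eval Fs t l).map Subtype.val := by
  unfold OTree.eval
  rw [treeEval hFs t hwf l]
  cases h : OTree.evalAux Fs t l with
  | none => simp
  | some p =>
    obtain ⟨a, rest⟩ := p
    cases rest <;> simp

end RamseyAlgAux


open RamseyAlg in
/-- Every subalgebra of a Ramsey algebra is a Ramsey algebra: if
`S ⊆ A` is closed under all operations of `F`, and `Fs` is the induced family of
operations on `S` (any family restricting `F`), then `(S, Fs)` is Ramsey whenever
`(A, F)` is. -/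
theorem stmt11 (ι A : Type) (ar : ι → ℕ) (F : ι → List A → A) (S : Set A)
    (hS : ∀ i (l : List A), l.length = ar i → (∀ x ∈ l, x ∈ S) → F i l ∈ S)
    (Fs : ι → List S → S)
    (hFs : ∀ i (l : List S), l.length = ar i →
      (Fs i l : A) = F i (l.map Subtype.val))
    (h : RamseyAlgebra ar F) : RamseyAlgebra ar Fs := by
  intro b X
  obtain ⟨a, ⟨t, len, e, he, hwf, heval⟩, hhom⟩ :=
    h (fun n => (b n : A)) (Subtype.val '' X)
  have key : ∀ j, ∃ s : S, OTree.eval Fs (t j) ((List.range (len j)).map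
      (fun i => b (e ((∑ m ∈ Finset.range j, len m) + i)))) = some s ∧
      (s : A) = a j := by
    intro j
    have hj := heval j
    have hl : (List.range (len j)).map
        (fun i => ((b (e ((∑ m ∈ Finset.range j, len m) + i))) : A)) =
        ((List.range (len j)).map
          (fun i => b (e ((∑ m ∈ Finset.range j, len m) + i)))).map
            Subtype.val := by
      simp
    rw [hl, RamseyAlgAux.evalEq hFs _ (hwf j)] at hj
    obtain ⟨s, hs1, hs2⟩ := Option.map_eq_some_iff.mp hj
    exact ⟨s, hs1, hs2⟩
  choose a' ha' hval using key
  have hFRsub : ∀ x ∈ FR ar Fs a', (x : A) ∈ FR ar F a := by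
    rintro x ⟨u, l, hu, hc, hev⟩
    refine ⟨u, l, hu, hc, ?_⟩
    have : (l.map a).map id = (l.map a').map Subtype.val := by
      simp only [List.map_map, List.map_id]
      exact List.map_congr_left (fun n _ => (hval n).symm)
    rw [List.map_id] at this
    rw [this, RamseyAlgAux.evalEq hFs _ hu, hev, Option.map_some]
  refine ⟨a', ⟨t, len, e, he, hwf, ha'⟩, ?_⟩
  rcases hhom with hsub | hdisj
  · left
    intro x hx
    obtain ⟨y, hy, hyx⟩ := hsub (hFRsub x hx)
    rwa [show y = x from Subtype.ext hyx] at hy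
  · right
    ext x
    simp only [Set.mem_inter_iff, Set.mem_empty_iff_false, iff_false, not_and]
    intro hx hxX
    have : (x : A) ∈ FR ar F a ∩ (Subtype.val '' X) :=
      ⟨hFRsub x hx, ⟨x, hxX, rfl⟩⟩
    rw [hdisj] at this
    exact this
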